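/- arXiv:0911.0172 — 2 statements merged into one kernel-verified Lean document; each statement's English description precedes it below -/
import Mathlib

section
/- Let D₁, D₂ be triangulated categories, F : D₁ → D₂ a triangle functor sending a stable t-structure (𝒰₁, 𝒱₁) in D₁ to a stable t-structure (𝒰₂, 𝒱₂) in D₂ (i.e. F(𝒰₁) ⊆ 𝒰₂ and F(𝒱₁) ⊆ 𝒱₂). If the restriction of F to 𝒱₁ is full (resp. faithful), then for every X ∈ D₁ and V ∈ 𝒱₁ the map Hom_{D₁}(X, V) → Hom_{D₂}(FX, FV) is surjective (resp. injective). -/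
open CategoryTheory Pretriangulated

universe v₁ v₂ u₁ u₂

variable {D₁ : Type u₁} [Category.{v₁} D₁] [Limits.HasZeroObject D₁] [Preadditive D₁]
  [HasShift D₁ ℤ] [∀ n : ℤ, (shiftFunctor D₁ n).Additive] [Pretriangulated D₁]
  {D₂ : Type u₂} [Category.{v₂} D₂] [Limits.HasZeroObject D₂] [Preadditive D₂]
  [HasShift D₂ ℤ] [∀ n : ℤ, (shiftFunctor D₂ n).Additive] [Pretriangulated D₂]

/-- A stable t-structure on a (pre)triangulated category. -/
def IsStableTStructure {D : Type u₁} [Category.{v₁} D] [Limits.HasZeroObject D]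
    [Preadditive D] [HasShift D ℤ] [∀ n : ℤ, (shiftFunctor D n).Additive]
    [Pretriangulated D] (U V : Set D) : Prop :=
  (∀ (n : ℤ) (X : D), X ∈ U → X⟦n⟧ ∈ U) ∧
  (∀ (n : ℤ) (X : D), X ∈ V → X⟦n⟧ ∈ V) ∧
  (∀ (X Y : D) (f : X ⟶ Y), X ∈ U → Y ∈ V → f = 0) ∧
  (∀ X : D, ∃ (A B : D) (f : A ⟶ X) (g : X ⟶ B) (h : B ⟶ A⟦(1 : ℤ)⟧),
    A ∈ U ∧ B ∈ V ∧ Triangle.mk f g h ∈ distTriang D)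

/-!
Take the truncation triangle `A → X → B → A⟦1⟧` of `X` with `A ∈ 𝒰₁`, `B ∈ 𝒱₁`, and fix
`V ∈ 𝒱₁`. Since `Hom(A, V) = 0` and `Hom(FA, FV) = 0`, every morphism `X → V` (resp.
`FX → FV`) factors through `X → B` (resp. `FX → FB`), which reduces surjectivity to that of
`Hom(B, V) → Hom(FB, FV)`. For injectivity, a morphism `g ≫ e : X → V` killed by `F` gives
`F g ≫ F e = 0`, so `F e` factors through `FB → (FA)⟦1⟧`; as `(FA)⟦1⟧ ∈ 𝒰₂`, `F e = 0`, hence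
`e = 0`.
-/

namespace CategoryTheory.Functor

variable (F : D₁ ⥤ D₂) [F.CommShift ℤ] [F.IsTriangulated]
  {T : Triangle D₁} {V : D₁}

theorem map_surjective_of_distinguished (hT : T ∈ distTriang D₁)
    (hA : ∀ φ : F.obj T.obj₁ ⟶ F.obj V, φ = 0)
    (hB : Function.Surjective (fun e : T.obj₃ ⟶ V => F.map e)) :
    Function.Surjective (fun f : T.obj₂ ⟶ V => F.map f) := by
  intro φ
  obtain ⟨ψ, hψ⟩ := Triangle.yoneda_exact₂ _ (F.map_distinguished _ hT) φ (hA _)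
  obtain ⟨e, rfl⟩ := hB ψ
  exact ⟨T.mor₂ ≫ e, (F.map_comp _ _).trans hψ.symm⟩

theorem eq_zero_of_map_eq_zero_of_distinguished (hT : T ∈ distTriang D₁)
    (hA : ∀ f : T.obj₁ ⟶ V, f = 0)
    (hA' : ∀ χ : (F.obj T.obj₁)⟦(1 : ℤ)⟧ ⟶ F.obj V, χ = 0)
    (hB : ∀ e : T.obj₃ ⟶ V, F.map e = 0 → e = 0)
    {f : T.obj₂ ⟶ V} (hf : F.map f = 0) : f = 0 := by
  obtain ⟨e, rfl⟩ := Triangle.yoneda_exact₂ _ hT f (hA _)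
  have hFe : F.map T.mor₂ ≫ F.map e = 0 := by rw [← F.map_comp, hf]
  obtain ⟨χ, hχ⟩ := Triangle.yoneda_exact₃ _ (F.map_distinguished _ hT) (F.map e) hFe
  have hχ0 : χ = 0 := hA' χ
  rw [hχ0, Limits.comp_zero] at hχ
  rw [hB e hχ, Limits.comp_zero]

end CategoryTheory.Functor

/-- If a triangle functor `F` sends a stable t-structure `(𝒰₁, 𝒱₁)` to `(𝒰₂, 𝒱₂)` and its
restriction to `𝒱₁` is full (resp. faithful), then `Hom(X, V) → Hom(FX, FV)` is surjective
(resp. injective) for every `X ∈ D₁` and `V ∈ 𝒱₁`. -/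
theorem hom_surjective_injective_of_restriction_full_faithful
    (F : D₁ ⥤ D₂) [F.CommShift ℤ] [F.IsTriangulated]
    (U₁ V₁ : Set D₁) (U₂ V₂ : Set D₂)
    (h₁ : IsStableTStructure U₁ V₁) (h₂ : IsStableTStructure U₂ V₂)
    (hU : ∀ X ∈ U₁, F.obj X ∈ U₂) (hV : ∀ X ∈ V₁, F.obj X ∈ V₂) :
    ((∀ (X Y : D₁), X ∈ V₁ → Y ∈ V₁ →
        Function.Surjective (fun f : X ⟶ Y => F.map f)) →
      ∀ (X V : D₁), V ∈ V₁ → Function.Surjective (fun f : X ⟶ V => F.map f)) ∧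
    ((∀ (X Y : D₁), X ∈ V₁ → Y ∈ V₁ →
        Function.Injective (fun f : X ⟶ Y => F.map f)) →
      ∀ (X V : D₁), V ∈ V₁ → Function.Injective (fun f : X ⟶ V => F.map f)) := by
  obtain ⟨-, -, hUV₁, htriangle⟩ := h₁
  obtain ⟨hU₂shift, -, hUV₂, -⟩ := h₂
  constructor
  · intro hfull X V hV₁
    obtain ⟨A, B, _, _, _, hA, hB, hT⟩ := htriangle X
    exact F.map_surjective_of_distinguished hT
      (fun φ => hUV₂ _ _ φ (hU A hA) (hV V hV₁)) (hfull B V hB hV₁)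
  · intro hfaith X V hV₁
    obtain ⟨A, B, _, _, _, hA, hB, hT⟩ := htriangle X
    refine (injective_iff_map_eq_zero F.mapAddHom).2 fun f hf =>
      F.eq_zero_of_map_eq_zero_of_distinguished hT (fun a => hUV₁ _ _ a hA hV₁)
        (fun χ => hUV₂ _ _ χ (hU₂shift 1 _ (hU A hA)) (hV V hV₁))
        (fun e he => hfaith B V hB hV₁ (he.trans (F.map_zero _ _).symm)) hf
end

section
/- Let F : D₁ → D₂ be a triangle functor between triangulated categories, sending stable t-structures (𝒰₁, 𝒱₁) and (𝒱₁, 𝒲₁) in D₁ to stable t-structures (𝒰₂, 𝒱₂) and (𝒱₂, 𝒲₂) in D₂ respectively. If F restricted to 𝒰₁ and F restricted to 𝒱₁ are both fully faithful, then F is fully faithful. If moreover both restrictions are equivalences onto 𝒰₂ and 𝒱₂, then F is a triangle equivalence. -/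
/-!
Applying `Hom(X, -)` to a decomposition triangle `A → Y → B → A⟦1⟧` of a stable t-structure
`(P, Q)` with `X ∈ P` kills the terms involving `B`, so a triangle functor that is fully
faithful on `P` and preserves `(P, Q)` is bijective on `Hom(X, Y)` for every `X ∈ P` and every
`Y`. Applied to `(𝒰, 𝒱)` and `(𝒱, 𝒲)` this covers all `X ∈ 𝒰₁` and all `X ∈ 𝒱₁`. For arbitrary
`X`, decompose `A → X → B → A⟦1⟧` with `A ∈ 𝒰₁`, `B ∈ 𝒱₁` and run the four lemmas on the long
exact sequences of `Hom(-, Y)` and `Hom(-, F Y)`. Finally the essential image of a full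
triangle functor is closed under extensions, and every object of `D₂` is an extension of an
object of `𝒱₂` by one of `𝒰₂`.
-/

open CategoryTheory Pretriangulated

universe v₁ v₂ u₁ u₂

variable {D₁ : Type u₁} [Category.{v₁} D₁] [Limits.HasZeroObject D₁] [Preadditive D₁]
  [HasShift D₁ ℤ] [∀ n : ℤ, (shiftFunctor D₁ n).Additive] [Pretriangulated D₁]
  {D₂ : Type u₂} [Category.{v₂} D₂] [Limits.HasZeroObject D₂] [Preadditive D₂]
  [HasShift D₂ ℤ] [∀ n : ℤ, (shiftFunctor D₂ n).Additive] [Pretriangulated D₂]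

open Limits

namespace CategoryTheory.Functor

variable (F : D₁ ⥤ D₂) [F.CommShift ℤ] [F.IsTriangulated]

lemma map_injective_of_distTriang {A X B : D₁} {a : A ⟶ X} {b : X ⟶ B}
    {c : B ⟶ A⟦(1 : ℤ)⟧} (hT : Triangle.mk a b c ∈ distTriang D₁) (Y : D₁)
    (hA : Function.Injective (F.map : (A ⟶ Y) → _))
    (hA₁ : Function.Surjective (F.map : (A⟦(1 : ℤ)⟧ ⟶ Y) → _))
    (hB : Function.Injective (F.map : (B ⟶ Y) → _)) :
    Function.Injective (F.map : (X ⟶ Y) → _) := by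
  refine (injective_iff_map_eq_zero F.mapAddHom).2 fun f hf ↦ ?_
  rw [mapAddHom_apply] at hf
  have haf : a ≫ f = 0 := hA (by rw [F.map_comp, hf, comp_zero, F.map_zero])
  obtain ⟨v, rfl⟩ : ∃ v : B ⟶ Y, f = b ≫ v := Triangle.yoneda_exact₂ _ hT f haf
  obtain ⟨s', hs'⟩ : ∃ s', F.map v = (F.map c ≫ (F.commShiftIso (1 : ℤ)).hom.app A) ≫ s' :=
    Triangle.yoneda_exact₃ _ (F.map_distinguished _ hT) (F.map v)
      ((F.map_comp b v).symm.trans hf)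
  obtain ⟨s, hs⟩ := hA₁ ((F.commShiftIso (1 : ℤ)).hom.app A ≫ s')
  obtain rfl : v = c ≫ s := hB (by simpa [hs] using hs')
  have hbc : b ≫ c = 0 := comp_distTriang_mor_zero₂₃ _ hT
  rw [← Category.assoc, hbc, zero_comp]

lemma map_surjective_of_distTriang {A X B : D₁} {a : A ⟶ X} {b : X ⟶ B}
    {c : B ⟶ A⟦(1 : ℤ)⟧} (hT : Triangle.mk a b c ∈ distTriang D₁) (Y : D₁)
    (hA : Function.Surjective (F.map : (A ⟶ Y) → _))
    (hBneg : Function.Injective (F.map : (B⟦(-1 : ℤ)⟧ ⟶ Y) → _))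
    (hB : Function.Surjective (F.map : (B ⟶ Y) → _)) :
    Function.Surjective (F.map : (X ⟶ Y) → _) := by
  intro φ
  obtain ⟨u, hu⟩ := hA (F.map a ≫ φ)
  have hT' := inv_rot_of_distTriang _ hT
  set d : B⟦(-1 : ℤ)⟧ ⟶ A := (Triangle.mk a b c).invRotate.mor₁
  have hda : d ≫ a = 0 := comp_distTriang_mor_zero₁₂ _ hT'
  have hdu : d ≫ u = 0 := hBneg (by
    rw [F.map_comp, hu, ← Category.assoc, ← F.map_comp, hda, F.map_zero, zero_comp, F.map_zero])
  obtain ⟨f₀, rfl⟩ : ∃ f₀ : X ⟶ Y, u = a ≫ f₀ := Triangle.yoneda_exact₂ _ hT' u hdu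
  obtain ⟨ψ, hψ⟩ : ∃ ψ, φ - F.map f₀ = F.map b ≫ ψ :=
    Triangle.yoneda_exact₂ _ (F.map_distinguished _ hT) (φ - F.map f₀)
      (show F.map a ≫ (φ - F.map f₀) = 0 by
        rw [Preadditive.comp_sub, ← F.map_comp, ← hu, sub_self])
  obtain ⟨w, rfl⟩ := hB ψ
  exact ⟨f₀ + b ≫ w, by simp [← hψ]⟩

lemma map_bijective_of_mem_left {P₁ Q₁ : Set D₁} {P₂ Q₂ : Set D₂}
    (h₁ : IsStableTStructure P₁ Q₁) (h₂ : IsStableTStructure P₂ Q₂)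
    (hP : ∀ X ∈ P₁, F.obj X ∈ P₂) (hQ : ∀ X ∈ Q₁, F.obj X ∈ Q₂)
    (hPff : ∀ X Y : D₁, X ∈ P₁ → Y ∈ P₁ → Function.Bijective (F.map : (X ⟶ Y) → _))
    {X : D₁} (hX : X ∈ P₁) (Y : D₁) : Function.Bijective (F.map : (X ⟶ Y) → _) := by
  obtain ⟨A, B, a, b, c, hA, hB, hT⟩ := h₁.2.2.2 Y
  have hT₂ := F.map_distinguished _ hT
  constructor
  · refine (injective_iff_map_eq_zero F.mapAddHom).2 fun f hf ↦ ?_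
    rw [mapAddHom_apply] at hf
    obtain ⟨g, rfl⟩ : ∃ g : X ⟶ A, f = g ≫ a :=
      Triangle.coyoneda_exact₂ _ hT f (h₁.2.2.1 X B _ hX hB)
    obtain ⟨k, hk⟩ : ∃ k : F.obj X ⟶ (F.obj B)⟦(-1 : ℤ)⟧, F.map g = k ≫ _ :=
      Triangle.coyoneda_exact₂ _ (inv_rot_of_distTriang _ hT₂) (F.map g)
        ((F.map_comp g a).symm.trans hf)
    have hk0 : k = 0 := h₂.2.2.1 _ _ k (hP X hX) (h₂.2.1 (-1) _ (hQ B hB))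
    have hg : g = 0 := (hPff X A hX hA).1 (by rw [F.map_zero, hk, hk0]; exact zero_comp)
    rw [hg, zero_comp]
  · intro φ
    obtain ⟨ψ, hψ⟩ := Triangle.coyoneda_exact₂ _ hT₂ φ (h₂.2.2.1 _ _ _ (hP X hX) (hQ B hB))
    obtain ⟨g, rfl⟩ := (hPff X A hX hA).2 ψ
    exact ⟨g ≫ a, (F.map_comp g a).trans hψ.symm⟩

lemma essSurj_of_isStableTStructure [F.Full] {U V : Set D₂} (h : IsStableTStructure U V)
    (hU : ∀ Y ∈ U, F.essImage Y) (hV : ∀ Y ∈ V, F.essImage Y) : F.EssSurj where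
  mem_essImage Y := by
    obtain ⟨A, B, a, b, c, hA, hB, hT⟩ := h.2.2.2 Y
    exact F.essImage.ext_of_isTriangulatedClosed₂ _ hT (hU A hA) (hV B hB)

end CategoryTheory.Functor

/-- Let `F` be a triangle functor sending consecutive stable t-structures `(𝒰₁, 𝒱₁)`,
`(𝒱₁, 𝒲₁)` to `(𝒰₂, 𝒱₂)`, `(𝒱₂, 𝒲₂)`.  If the restrictions of `F` to `𝒰₁` and to `𝒱₁`
are fully faithful then `F` is fully faithful; if moreover these restrictions are
equivalences onto `𝒰₂` and `𝒱₂` (i.e. also essentially surjective onto them), then `F`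
is a (triangle) equivalence. -/
theorem fullyFaithful_and_equivalence_of_restrictions
    (F : D₁ ⥤ D₂) [F.CommShift ℤ] [F.IsTriangulated]
    (U₁ V₁ W₁ : Set D₁) (U₂ V₂ W₂ : Set D₂)
    (hUV₁ : IsStableTStructure U₁ V₁) (hVW₁ : IsStableTStructure V₁ W₁)
    (hUV₂ : IsStableTStructure U₂ V₂) (hVW₂ : IsStableTStructure V₂ W₂)
    (hU : ∀ X ∈ U₁, F.obj X ∈ U₂) (hV : ∀ X ∈ V₁, F.obj X ∈ V₂)
    (hW : ∀ X ∈ W₁, F.obj X ∈ W₂)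
    (hUff : ∀ (X Y : D₁), X ∈ U₁ → Y ∈ U₁ →
      Function.Bijective (fun f : X ⟶ Y => F.map f))
    (hVff : ∀ (X Y : D₁), X ∈ V₁ → Y ∈ V₁ →
      Function.Bijective (fun f : X ⟶ Y => F.map f)) :
    (∀ (X Y : D₁), Function.Bijective (fun f : X ⟶ Y => F.map f)) ∧
    (((∀ Y ∈ U₂, ∃ X ∈ U₁, Nonempty (F.obj X ≅ Y)) ∧
      (∀ Y ∈ V₂, ∃ X ∈ V₁, Nonempty (F.obj X ≅ Y))) → F.IsEquivalence) := by
  have bijU {X : D₁} (hX : X ∈ U₁) := F.map_bijective_of_mem_left hUV₁ hUV₂ hU hV hUff hX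
  have bijV {X : D₁} (hX : X ∈ V₁) := F.map_bijective_of_mem_left hVW₁ hVW₂ hV hW hVff hX
  have bij (X Y : D₁) : Function.Bijective (F.map : (X ⟶ Y) → _) := by
    obtain ⟨A, B, a, b, c, hA, hB, hT⟩ := hUV₁.2.2.2 X
    exact ⟨F.map_injective_of_distTriang hT Y (bijU hA Y).1 (bijU (hUV₁.1 1 A hA) Y).2
        (bijV hB Y).1,
      F.map_surjective_of_distTriang hT Y (bijU hA Y).2 (bijV (hUV₁.2.1 (-1) B hB) Y).1
        (bijV hB Y).2⟩
  refine ⟨bij, fun ⟨essU, essV⟩ ↦ ?_⟩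
  have : F.Full := ⟨fun {X Y} ↦ (bij X Y).2⟩
  have : F.Faithful := ⟨fun {X Y} ↦ (bij X Y).1⟩
  have : F.EssSurj := F.essSurj_of_isStableTStructure hUV₂
    (fun Y hY ↦ let ⟨X, _, e⟩ := essU Y hY; ⟨X, e⟩)
    (fun Y hY ↦ let ⟨X, _, e⟩ := essV Y hY; ⟨X, e⟩)
  exact {}
end
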